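/- Let P be a nonzero real 3×3 skew-symmetric matrix and a, b ∈ ℝ³ vectors with P b = 0 and b ≠ 0. Then g(a) b = 0 if and only if P a = 0. (If dS ≠ 0 at a regular point, then gdS = 0 if and only if PdH = 0.) -/

import Mathlib

open Matrix RealInnerProductSpace

/-! A skew-symmetric `P` acts as `v ↦ ω × v` for an axis `ω`, nonzero when `P` is, and
`g(a) v = a × (a × v)`. Since `⟨v, a × (a × v)⟩ = -‖a × v‖²`, `g(a) b = 0` means `a ∥ b`;
and `P b = 0` means `b ∥ ω`. Parallelism is transitive through nonzero vectors, so with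
`b, ω ≠ 0` we get `a ∥ b ↔ a ∥ ω`. -/

/-- The dissipative tensor `g(a) = a ⊗ a − ‖a‖² I` of the paper, as a 3×3 matrix;
it acts by `g(a) v = ⟨a, v⟩ a − ‖a‖² v`. -/
noncomputable def gmat (a : EuclideanSpace ℝ (Fin 3)) : Matrix (Fin 3) (Fin 3) ℝ :=
  Matrix.vecMulVec a a - (‖a‖ ^ 2) • 1

section CrossProduct

variable {R : Type*} [CommRing R]

theorem cross_eq_zero_comm {u v : Fin 3 → R} : u ⨯₃ v = 0 ↔ v ⨯₃ u = 0 := by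
  rw [← cross_anticomm, neg_eq_zero]

def skewAxis (P : Matrix (Fin 3) (Fin 3) R) : Fin 3 → R :=
  ![P 2 1, P 0 2, P 1 0]

variable [LinearOrder R] [IsStrictOrderedRing R]

theorem mulVec_eq_skewAxis_cross {P : Matrix (Fin 3) (Fin 3) R} (hP : Pᵀ = -P) (v : Fin 3 → R) :
    P *ᵥ v = skewAxis P ⨯₃ v := by
  have hskew : ∀ i j, P j i = -P i j := fun i j => by
    simpa using congrFun (congrFun hP i) j
  have hdiag : ∀ i, P i i = 0 := fun i => by linarith [hskew i i]
  ext i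
  fin_cases i <;>
    simp only [mulVec, dotProduct, Fin.sum_univ_three, cross_apply, skewAxis, hdiag, hskew 0 1,
      hskew 1 2, hskew 2 0, Fin.isValue, Fin.zero_eta, Fin.mk_one, Fin.reduceFinMk, cons_val_zero,
      cons_val_one, cons_val] <;> ring

theorem skewAxis_ne_zero {P : Matrix (Fin 3) (Fin 3) R} (hP : Pᵀ = -P) (hP0 : P ≠ 0) :
    skewAxis P ≠ 0 := by
  contrapose! hP0
  refine ext_iff_mulVec.mpr fun v => ?_
  rw [mulVec_eq_skewAxis_cross hP, hP0, zero_mulVec, map_zero, LinearMap.zero_apply]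

theorem cross_cross_self_eq_zero_iff {u v : Fin 3 → R} :
    u ⨯₃ (u ⨯₃ v) = 0 ↔ u ⨯₃ v = 0 := by
  refine ⟨fun h => ?_, fun h => by rw [h, map_zero]⟩
  have hdot : v ⬝ᵥ u ⨯₃ (u ⨯₃ v) = -((u ⨯₃ v) ⬝ᵥ (u ⨯₃ v)) := by
    rw [triple_product_permutation, triple_product_permutation, ← cross_anticomm u v,
      dotProduct_neg]
  rw [h, dotProduct_zero, eq_comm, neg_eq_zero, dotProduct_self_eq_zero] at hdot
  exact hdot

theorem cross_eq_zero_of_cross_eq_zero {u v w : Fin 3 → R} (hu : u ≠ 0) (hv : u ⨯₃ v = 0)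
    (hw : u ⨯₃ w = 0) : v ⨯₃ w = 0 := by
  have hvu : (u ⬝ᵥ u) • v = (u ⬝ᵥ v) • u := by
    have := cross_cross_eq_smul_sub_smul' u u v
    rw [hv, map_zero, eq_comm, sub_eq_zero] at this
    exact this.symm
  have : (u ⬝ᵥ u) • (v ⨯₃ w) = 0 := by
    rw [← LinearMap.map_smul₂, hvu, LinearMap.map_smul₂, hw, smul_zero]
  exact (smul_eq_zero.mp this).resolve_left (dotProduct_self_eq_zero.not.mpr hu)

end CrossProduct

theorem gmat_mulVec (a v : EuclideanSpace ℝ (Fin 3)) : gmat a *ᵥ v = a ⨯₃ (a ⨯₃ v) := by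
  have hnorm : ‖a‖ ^ 2 = a.ofLp ⬝ᵥ a.ofLp := by
    rw [← real_inner_self_eq_norm_sq, EuclideanSpace.inner_eq_star_dotProduct, star_trivial]
  rw [gmat, sub_mulVec, vecMulVec_mulVec, op_smul_eq_smul, smul_mulVec, one_mulVec, hnorm,
    cross_cross_eq_smul_sub_smul']

/-- If `dS ≠ 0` at a regular point, then `g dS = 0` iff `P dH = 0`. -/
theorem dissipative_zero_iff_hamiltonian_zero (P : Matrix (Fin 3) (Fin 3) ℝ) (hP : Pᵀ = -P)
    (hP0 : P ≠ 0) (a b : EuclideanSpace ℝ (Fin 3)) (hb : P *ᵥ b = 0) (hb0 : b ≠ 0) :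
    gmat a *ᵥ b = 0 ↔ P *ᵥ a = 0 := by
  rw [mulVec_eq_skewAxis_cross hP] at hb ⊢
  rw [gmat_mulVec, cross_cross_self_eq_zero_iff]
  constructor
  · intro hab
    exact cross_eq_zero_of_cross_eq_zero ((WithLp.ofLp_eq_zero 2).not.mpr hb0)
      (cross_eq_zero_comm.mp hb) (cross_eq_zero_comm.mp hab)
  · intro ha
    exact cross_eq_zero_of_cross_eq_zero (skewAxis_ne_zero hP hP0) ha hb
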